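/- With the notation above, integrating the constrained measures over the constraint recovers Haar measure: for continuous f : Gⁿ → ℝ, ∫_G [∫ f dδ_{𝒪_y(n)}] dy = ∫_{Gⁿ} f(x₁,…,x_n) dx₁⋯dx_n, where 𝒪_y is the conjugacy class of y. -/

import Mathlib

/-!
Average `f` over the gauge action `x ↦ (gᵢ xᵢ gᵢ₊₁⁻¹)ᵢ` of `Gⁿ` against the Haar measure of `Gⁿ`;
call the result `F`. Both `δ_{𝒪_y(n)}` and the Haar measure of `Gⁿ` are invariant under this
action, so by Fubini `f` and `F` have the same integral against each of them. Gauging by the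
partial products moves `x` to `(1, …, 1, x₁⋯xₙ)`, and a constant gauge conjugates that last entry,
so `F x` only depends on the conjugacy class of `x₁⋯xₙ`. The theorem then reduces to the fact
that the product map pushes the Haar measure of `Gⁿ` forward to the Haar measure of `G`.
-/

open MeasureTheory

section CyclicConj

variable {G : Type*} [Group G] {n : ℕ}

def cyclicConj (g x : Fin (n + 1) → G) : Fin (n + 1) → G :=
  fun i => g i * x i * (g (i + 1))⁻¹

lemma cyclicConj_mul (g h x : Fin (n + 1) → G) :
    cyclicConj (g * h) x = cyclicConj g (cyclicConj h x) := by
  funext i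
  simp only [cyclicConj, Pi.mul_apply]
  group

lemma cyclicConj_const_mulSingle (c y : G) (i : Fin (n + 1)) :
    cyclicConj (fun _ => c) (Pi.mulSingle i y) = Pi.mulSingle i (c * y * c⁻¹) := by
  funext j
  rcases eq_or_ne j i with rfl | hj
  · simp [cyclicConj]
  · simp [cyclicConj, hj]

lemma cyclicConj_partialProd (x : Fin (n + 1) → G) :
    cyclicConj (fun i => Fin.partialProd x i.castSucc) x =
      Pi.mulSingle (Fin.last n) (List.ofFn x).prod := by
  funext i
  rcases Fin.eq_castSucc_or_eq_last i with ⟨i, rfl⟩ | rfl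
  · rw [Pi.mulSingle_eq_of_ne (Fin.castSucc_lt_last i).ne, cyclicConj, Fin.coeSucc_eq_succ,
      Fin.castSucc_succ, Fin.partialProd_succ, mul_inv_cancel]
  · rw [cyclicConj, Fin.last_add_one, Fin.castSucc_zero, Fin.partialProd_zero, inv_one, mul_one,
      ← Fin.partialProd_succ, Fin.succ_last, Pi.mulSingle_eq_same, Fin.partialProd,
      Fin.val_last, List.take_of_length_le (by simp)]

lemma exists_cyclicConj_eq_mulSingle {x : Fin (n + 1) → G} {y : G}
    (hxy : IsConj y (List.ofFn x).prod) :
    ∃ g, cyclicConj g x = Pi.mulSingle (Fin.last n) y := by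
  obtain ⟨c, rfl⟩ := isConj_iff.1 hxy.symm
  exact ⟨(fun _ => c) * fun i => Fin.partialProd x i.castSucc, by
    rw [cyclicConj_mul, cyclicConj_partialProd, cyclicConj_const_mulSingle]⟩

end CyclicConj

lemma continuous_list_prod_ofFn {M : Type*} [Monoid M] [TopologicalSpace M] [ContinuousMul M]
    {n : ℕ} : Continuous fun x : Fin n → M => (List.ofFn x).prod := by
  simp_rw [List.ofFn_eq_map]
  exact continuous_list_prod _ fun i _ => continuous_apply i

@[fun_prop]
lemma Continuous.cyclicConj {G X : Type*} [Group G] [TopologicalSpace G] [IsTopologicalGroup G]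
    [TopologicalSpace X] {n : ℕ} {g x : X → Fin (n + 1) → G} (hg : Continuous g)
    (hx : Continuous x) : Continuous fun a => cyclicConj (g a) (x a) := by
  unfold _root_.cyclicConj
  fun_prop

lemma isClosed_setOf_isConj {G : Type*} [Group G] [TopologicalSpace G] [IsTopologicalGroup G]
    [CompactSpace G] [T2Space G] (y : G) : IsClosed {z | IsConj y z} := by
  have : {z | IsConj y z} = Set.range fun c : G => c * y * c⁻¹ := by
    ext z
    exact isConj_iff
  rw [this]
  exact (isCompact_range (by fun_prop)).isClosed

namespace MeasureTheory.Measure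

variable {G : Type*} [Group G] [TopologicalSpace G] [IsTopologicalGroup G] [CompactSpace G]
  [MeasurableSpace G] [BorelSpace G]

lemma eq_of_isMulLeftInvariant_of_isProbabilityMeasure (μ ν : Measure G)
    [IsProbabilityMeasure μ] [IsProbabilityMeasure ν] [μ.IsMulLeftInvariant]
    [ν.IsMulLeftInvariant] : μ = ν := by
  have := isHaarMeasure_of_isCompact_nonempty_interior μ .univ isCompact_univ
    (by simp) (by simp) (by simp)
  have := isHaarMeasure_of_isCompact_nonempty_interior ν .univ isCompact_univ
    (by simp) (by simp) (by simp)
  exact isHaarMeasure_eq_of_isProbabilityMeasure μ ν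

lemma isMulRightInvariant_of_isProbabilityMeasure (μ : Measure G) [IsProbabilityMeasure μ]
    [μ.IsMulLeftInvariant] : μ.IsMulRightInvariant where
  map_mul_right_eq_self g := by
    have : IsProbabilityMeasure (map (· * g) μ) :=
      isProbabilityMeasure_map (measurable_mul_const g).aemeasurable
    exact eq_of_isMulLeftInvariant_of_isProbabilityMeasure _ μ

/-- Multiplying the first coordinate by `g` multiplies the product by `g`, so the image measure
is left-invariant. -/
lemma map_list_prod_ofFn_pi [SecondCountableTopology G] (μ : Measure G) [IsProbabilityMeasure μ]
    [μ.IsMulLeftInvariant] {n : ℕ} :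
    map (fun x : Fin (n + 1) → G => (List.ofFn x).prod) (Measure.pi fun _ => μ) = μ := by
  set prod := fun x : Fin (n + 1) → G => (List.ofFn x).prod
  have hprod : Measurable prod := continuous_list_prod_ofFn.measurable
  have : IsProbabilityMeasure (map prod (Measure.pi fun _ => μ)) :=
    isProbabilityMeasure_map hprod.aemeasurable
  have : (map prod (Measure.pi fun _ => μ)).IsMulLeftInvariant := by
    refine ⟨fun g => ?_⟩
    have hcomm : (g * ·) ∘ prod = prod ∘ (Pi.mulSingle 0 g * ·) := by
      funext x
      simp [prod, List.ofFn_succ, mul_assoc]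
    rw [map_map (measurable_const_mul g) hprod, hcomm,
      ← map_map hprod (measurable_const_mul _), map_mul_left_eq_self]
  exact eq_of_isMulLeftInvariant_of_isProbabilityMeasure _ μ

end MeasureTheory.Measure

section CyclicAverage

variable {G : Type*} [Group G] [MeasurableSpace G] {n : ℕ}

noncomputable def cyclicAverage (μ : Measure (Fin (n + 1) → G)) (f : (Fin (n + 1) → G) → ℝ)
    (x : Fin (n + 1) → G) : ℝ :=
  ∫ g, f (cyclicConj g x) ∂μ

lemma measurePreserving_cyclicConj [MeasurableMul G] (μ : Measure G) [SigmaFinite μ]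
    [μ.IsMulLeftInvariant] [μ.IsMulRightInvariant] (g : Fin (n + 1) → G) :
    MeasurePreserving (cyclicConj g) (Measure.pi fun _ => μ) (Measure.pi fun _ => μ) :=
  measurePreserving_pi _ _ fun i =>
    (measurePreserving_mul_right μ _).comp (measurePreserving_mul_left μ (g i))

lemma cyclicAverage_cyclicConj [MeasurableMul G] (μ : Measure (Fin (n + 1) → G))
    [μ.IsMulRightInvariant] (f : (Fin (n + 1) → G) → ℝ) (h x : Fin (n + 1) → G) :
    cyclicAverage μ f (cyclicConj h x) = cyclicAverage μ f x := by
  simp only [cyclicAverage, ← cyclicConj_mul]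
  exact integral_mul_right_eq_self (fun g => f (cyclicConj g x)) h

lemma cyclicAverage_eq_of_isConj [MeasurableMul G] (μ : Measure (Fin (n + 1) → G))
    [μ.IsMulRightInvariant] (f : (Fin (n + 1) → G) → ℝ) {x : Fin (n + 1) → G} {y : G}
    (hxy : IsConj y (List.ofFn x).prod) :
    cyclicAverage μ f x = cyclicAverage μ f (Pi.mulSingle (Fin.last n) y) := by
  obtain ⟨g, hg⟩ := exists_cyclicConj_eq_mulSingle hxy
  rw [← hg, cyclicAverage_cyclicConj]

variable [TopologicalSpace G] [IsTopologicalGroup G] [CompactSpace G]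
  [SecondCountableTopology G] [BorelSpace G]

lemma continuous_cyclicAverage (μ : Measure (Fin (n + 1) → G)) [IsFiniteMeasure μ]
    {f : (Fin (n + 1) → G) → ℝ} (hf : Continuous f) : Continuous (cyclicAverage μ f) := by
  have := continuous_parametric_integral_of_continuous (μ := μ)
    (f := fun x g => f (cyclicConj g x)) (by fun_prop) isCompact_univ
  unfold cyclicAverage
  simpa only [Measure.restrict_univ] using this

lemma integral_cyclicAverage (μ : Measure (Fin (n + 1) → G)) [IsProbabilityMeasure μ]
    (ρ : Measure (Fin (n + 1) → G)) [IsFiniteMeasure ρ]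
    (hρ : ∀ g, Measure.map (cyclicConj g) ρ = ρ) {f : (Fin (n + 1) → G) → ℝ}
    (hf : Continuous f) :
    ∫ x, cyclicAverage μ f x ∂ρ = ∫ x, f x ∂ρ := by
  have hint : Integrable (Function.uncurry fun x g => f (cyclicConj g x)) (ρ.prod μ) :=
    Continuous.integrable_of_hasCompactSupport (by fun_prop) (.of_compactSpace _)
  calc ∫ x, cyclicAverage μ f x ∂ρ = ∫ g, ∫ x, f (cyclicConj g x) ∂ρ ∂μ :=
        integral_integral_swap hint
    _ = ∫ _g, ∫ x, f x ∂ρ ∂μ := by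
        congr 1 with g
        rw [← integral_map (by fun_prop : Continuous (cyclicConj g)).aemeasurable
          hf.aestronglyMeasurable, hρ]
    _ = ∫ x, f x ∂ρ := by simp

lemma integral_eq_cyclicAverage_of_ae_isConj (μ : Measure (Fin (n + 1) → G))
    [IsProbabilityMeasure μ] [μ.IsMulRightInvariant] (ρ : Measure (Fin (n + 1) → G))
    [IsProbabilityMeasure ρ] (hρ : ∀ g, Measure.map (cyclicConj g) ρ = ρ) {y : G}
    (hρy : ∀ᵐ x ∂ρ, IsConj y (List.ofFn x).prod) {f : (Fin (n + 1) → G) → ℝ}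
    (hf : Continuous f) :
    ∫ x, f x ∂ρ = cyclicAverage μ f (Pi.mulSingle (Fin.last n) y) := by
  rw [← integral_cyclicAverage μ ρ hρ hf]
  calc ∫ x, cyclicAverage μ f x ∂ρ = ∫ _x, cyclicAverage μ f (Pi.mulSingle (Fin.last n) y) ∂ρ :=
        integral_congr_ae (hρy.mono fun x hx => cyclicAverage_eq_of_isConj μ f hx)
    _ = cyclicAverage μ f (Pi.mulSingle (Fin.last n) y) := by simp

end CyclicAverage

/-- Integrating the constrained measures `δ_{𝒪_y(n)}` over the constraint `y` (with
respect to normalized Haar measure) recovers the Haar measure of `Gⁿ`: for continuous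
`f : Gⁿ → ℝ`, `∫_G (∫ f dδ_{𝒪_y(n)}) dy = ∫_{Gⁿ} f dx₁⋯dxₙ`.  Here `n = m + 1 ≥ 1`
and, for each `y`, `ν y = δ_{𝒪_y(n)}` is the unique probability measure on
`{(x₁,…,xₙ) : x₁⋯xₙ ∈ 𝒪_y}` invariant under
`(g₁,…,gₙ)·(x₁,…,xₙ) = (g₁x₁g₂⁻¹,…,gₙxₙg₁⁻¹)`. -/
theorem integral_constrained_uniform_over_constraint
    {G : Type*} [Group G] [TopologicalSpace G] [IsTopologicalGroup G] [CompactSpace G]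
    [T2Space G] [SecondCountableTopology G] [MeasurableSpace G] [BorelSpace G]
    (haar : Measure G) [IsProbabilityMeasure haar] [haar.IsMulLeftInvariant]
    (m : ℕ) (ν : G → Measure (Fin (m + 1) → G))
    (hνprob : ∀ y, IsProbabilityMeasure (ν y))
    (hνsupp : ∀ y : G, ν y {x | IsConj y ((List.ofFn x).prod)} = 1)
    (hνinv : ∀ (y : G) (g : Fin (m + 1) → G),
      Measure.map (fun x : Fin (m + 1) → G => fun i => g i * x i * (g (i + 1))⁻¹) (ν y) = ν y)
    (f : (Fin (m + 1) → G) → ℝ) (hf : Continuous f) :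
    ∫ y, (∫ x, f x ∂(ν y)) ∂haar = ∫ x, f x ∂(Measure.pi fun _ => haar) := by
  have := haar.isMulRightInvariant_of_isProbabilityMeasure
  set μ := Measure.pi fun _ : Fin (m + 1) => haar
  set F := cyclicAverage μ f
  have hν (y : G) : ∫ x, f x ∂(ν y) = F (Pi.mulSingle (Fin.last m) y) := by
    have := hνprob y
    refine integral_eq_cyclicAverage_of_ae_isConj μ (ν y) (hνinv y) ?_ hf
    have hmeas : MeasurableSet {x : Fin (m + 1) → G | IsConj y (List.ofFn x).prod} :=
      continuous_list_prod_ofFn.measurable (isClosed_setOf_isConj y).measurableSet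
    exact (prob_compl_eq_zero_iff hmeas).2 (hνsupp y)
  calc ∫ y, (∫ x, f x ∂(ν y)) ∂haar = ∫ y, F (Pi.mulSingle (Fin.last m) y) ∂haar := by
        simp_rw [hν]
    _ = ∫ x, F (Pi.mulSingle (Fin.last m) (List.ofFn x).prod) ∂μ := by
        have hF : Continuous fun y => F (Pi.mulSingle (Fin.last m) y) :=
          (continuous_cyclicAverage μ hf).comp (continuous_mulSingle (A := fun _ => G) _)
        rw [← haar.map_list_prod_ofFn_pi,
          integral_map (continuous_list_prod_ofFn (n := m + 1)).aemeasurable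
            hF.aestronglyMeasurable]
    _ = ∫ x, F x ∂μ := by
        congr 1 with x
        exact (cyclicAverage_eq_of_isConj μ f (IsConj.refl _)).symm
    _ = ∫ x, f x ∂μ :=
        integral_cyclicAverage μ μ (fun g => (measurePreserving_cyclicConj haar g).map_eq) hf
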